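/- arXiv:2305.03116 — 2 statements merged into one kernel-verified Lean document; each statement's English description precedes it below -/
import Mathlib

section
/- The best constant in the weak type (1,1) inequality for the uncentered maximal operator on the integers equals 2: C^u(X₁, 1) = 2. That is, λ · #{l ∈ ℤ : M^u f(l) ≥ λ} ≤ 2‖f‖_{ℓ¹} for all f ∈ ℓ¹(ℤ) and λ > 0, and 2 cannot be replaced by any smaller constant. -/
open MeasureTheory ENNReal Filter

noncomputable section

variable {X : Type*} [MeasurableSpace X]

/-- The one-sided ergodic maximal operator `M⁻f(x) = sup_N |(1/(N+1)) Σ_{n=0}^N f(Tⁿx)|`. -/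
def maxOS (T : Equiv.Perm X) (f : X → ℝ) (x : X) : ℝ≥0∞ :=
  ⨆ N : ℕ,
    (‖(∑ n ∈ Finset.range (N + 1), f ((T ^ n) x)) / ((N : ℝ) + 1)‖₊ : ℝ≥0∞)

/-- The centered ergodic maximal operator `M^c f(x) = sup_N |(1/(2N+1)) Σ_{n=-N}^N f(Tⁿx)|`. -/
def maxC (T : Equiv.Perm X) (f : X → ℝ) (x : X) : ℝ≥0∞ :=
  ⨆ N : ℕ,
    (‖(∑ n ∈ Finset.Icc (-(N : ℤ)) (N : ℤ), f ((T ^ n) x)) / (2 * (N : ℝ) + 1)‖₊ : ℝ≥0∞)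

/-- The uncentered ergodic maximal operator
`M^u f(x) = sup_{r,s ≥ 0} |(1/(r+s+1)) Σ_{n=-r}^{s} f(Tⁿx)|`. -/
def maxU (T : Equiv.Perm X) (f : X → ℝ) (x : X) : ℝ≥0∞ :=
  ⨆ r : ℕ, ⨆ s : ℕ,
    (‖(∑ n ∈ Finset.Icc (-(r : ℤ)) (s : ℤ), f ((T ^ n) x)) / ((r : ℝ) + (s : ℝ) + 1)‖₊ : ℝ≥0∞)

/-- The best constant in the weak type (1,1) inequality for a maximal operator `M`:
the smallest `C` with `λ · μ({x : M f(x) ≥ λ}) ≤ C ‖f‖₁` for all `f ∈ L¹(μ)` and all `λ`. -/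
def weakConst (μ : Measure X) (M : (X → ℝ) → X → ℝ≥0∞) : ℝ≥0∞ :=
  sInf {C | ∀ f : X → ℝ, Integrable f μ →
    ∀ l : ℝ≥0∞, l * μ {x | l ≤ M f x} ≤ C * eLpNorm f 1 μ}

/-- The best constant in the strong type (p,p) inequality for a maximal operator `M`:
the smallest `C` with `‖M f‖_p ≤ C ‖f‖_p` for all `f ∈ L^p(μ)`. -/
def strongConst (μ : Measure X) (M : (X → ℝ) → X → ℝ≥0∞) (p : ℝ) : ℝ≥0∞ :=
  sInf {C | ∀ f : X → ℝ, MemLp f (ENNReal.ofReal p) μ →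
    (∫⁻ x, M f x ^ p ∂μ) ^ (1 / p) ≤ C * eLpNorm f (ENNReal.ofReal p) μ}

/-- The best constant in the `L^∞` inequality for a maximal operator `M`. -/
def supConst (μ : Measure X) (M : (X → ℝ) → X → ℝ≥0∞) : ℝ≥0∞ :=
  sInf {C | ∀ f : X → ℝ, MemLp f ∞ μ → essSup (M f) μ ≤ C * eLpNorm f ∞ μ}

/-- The best constant `C_M(X, p)` for `p ∈ [1,∞]`: the weak type (1,1) constant for `p = 1`,
the `L^∞` constant for `p = ∞`, and the strong type (p,p) constant for `p ∈ (1,∞)`. -/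
def bestConst (μ : Measure X) (M : (X → ℝ) → X → ℝ≥0∞) (p : ℝ≥0∞) : ℝ≥0∞ :=
  if p = 1 then weakConst μ M
  else if p = ∞ then supConst μ M
  else strongConst μ M p.toReal

/-- The shift `l ↦ l + 1` on `ℤ`, the transformation of the canonical system `X₁`. -/
def shiftZ : Equiv.Perm ℤ := Equiv.addRight 1

/-- Ergodicity of an invertible transformation:
`T⁻¹(E) = E` implies `μ(E) = 0` or `μ(X \ E) = 0`. -/
def IsErgodicPerm (μ : Measure X) (T : Equiv.Perm X) : Prop :=
  ∀ E : Set X, MeasurableSet E → (⇑T) ⁻¹' E = E → μ E = 0 ∨ μ Eᶜ = 0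

/-- Nontriviality of a measure space: there is a set of strictly positive finite measure. -/
def NontrivialSpace (μ : Measure X) : Prop :=
  ∃ E : Set X, MeasurableSet E ∧ 0 < μ E ∧ μ E < ∞

/-- `X` consists of finitely many atoms: it splits into disjoint measurable sets
`X₀, X₁, …, X_L` with `μ(X₀) = 0`, `T(X_l) ⊆ X_{l+1}` for `1 ≤ l ≤ L-1`, `T(X_L) ⊆ X₁`, and
no `X_l`, `1 ≤ l ≤ L`, splits into two disjoint measurable sets of nonzero measure. -/
def FinitelyManyAtoms (μ : Measure X) (T : Equiv.Perm X) : Prop :=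
  ∃ (L : ℕ) (A : ℕ → Set X), 0 < L ∧
    (∀ l, l ≤ L → MeasurableSet (A l)) ∧
    (∀ l l', l ≤ L → l' ≤ L → l ≠ l' → Disjoint (A l) (A l')) ∧
    (⋃ l ≤ L, A l) = Set.univ ∧
    μ (A 0) = 0 ∧
    (∀ l, 1 ≤ l → l ≤ L - 1 → ⇑T '' A l ⊆ A (l + 1)) ∧
    (⇑T '' A L ⊆ A 1) ∧
    (∀ l, 1 ≤ l → l ≤ L → ∀ S : Set X, MeasurableSet S → S ⊆ A l →
      μ S = 0 ∨ μ (A l \ S) = 0)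

/-- The Rokhlin condition (case (B) of the Kakutani–Rokhlin lemma): for each `L ∈ ℕ` there is
a set `E_L` of strictly positive finite measure with `T^{-l}(E_L)`, `l ∈ [L]`, disjoint. -/
def RokhlinCondition (μ : Measure X) (T : Equiv.Perm X) : Prop :=
  ∀ L : ℕ, 0 < L → ∃ E : Set X, MeasurableSet E ∧ 0 < μ E ∧ μ E < ∞ ∧
    ∀ l l' : ℕ, 1 ≤ l → l ≤ L → 1 ≤ l' → l' ≤ L → l ≠ l' →
      Disjoint ((⇑(T ^ l)) ⁻¹' E) ((⇑(T ^ l')) ⁻¹' E)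

/-!
Call an integer interval heavy if `|f|` has average at least `c` on it. If `M^u f(x) > c`, some
window `[a, b] ∋ x` has average `> c`; splitting it at `x`, either `[a, x]` is heavy or
`[x + 1, b]` has average `> c`. Hence `{M^u f > c}` lies in the set of right endpoints of heavy
intervals together with the set of left endpoints shifted by `-1`. Each of these has at most
`‖f‖₁ / c` points (rising sun argument): greedily take a heavy interval starting at the least
point, discard the points it covers and repeat; the chosen intervals are disjoint. Conversely, for
the unit mass at `0` every point of `[-N, N]` lies in a window of length `N + 1` containing `0`,
so `C ≥ (2N + 1) / (N + 1) → 2`.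
-/

open Finset NNReal

section RisingSun

variable {α : Type*} [LinearOrder α] [LocallyFiniteOrder α] {g : α → ℝ≥0∞} {c : ℝ≥0∞}

def rightHeavy (g : α → ℝ≥0∞) (c : ℝ≥0∞) : Set α :=
  {x | ∃ b, x ≤ b ∧ c * #(Icc x b) ≤ ∑ n ∈ Icc x b, g n}

def leftHeavy (g : α → ℝ≥0∞) (c : ℝ≥0∞) : Set α :=
  {x | ∃ a ≤ x, c * #(Icc a x) ≤ ∑ n ∈ Icc a x, g n}

theorem mul_card_le_tsum_indicator_of_subset_rightHeavy (F : Finset α)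
    (hF : ↑F ⊆ rightHeavy g c) : c * #F ≤ ∑' n, (⋃ x ∈ F, Set.Ici x).indicator g n := by
  induction F using Finset.strongInduction with
  | H F ih =>
    rcases F.eq_empty_or_nonempty with rfl | hne
    · simp
    set x₀ := F.min' hne
    obtain ⟨b, hx₀b, hb⟩ := hF (F.min'_mem hne)
    set F' := F.filter (b < ·)
    have hF' : F' ⊂ F := filter_ssubset.2 ⟨x₀, F.min'_mem hne, not_lt.2 hx₀b⟩
    have hcard : #F ≤ #(Icc x₀ b) + #F' := by
      refine (card_le_card fun x hx => ?_).trans (card_union_le _ _)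
      rcases le_or_gt x b with hxb | hbx
      · exact mem_union_left _ (mem_Icc.2 ⟨F.min'_le x hx, hxb⟩)
      · exact mem_union_right _ (mem_filter.2 ⟨hx, hbx⟩)
    have hdisj : Disjoint (↑(Icc x₀ b) : Set α) (⋃ x ∈ F', Set.Ici x) := by
      refine Set.disjoint_left.2 fun n hn hn' => ?_
      obtain ⟨x, hx, hxn⟩ := Set.mem_iUnion₂.1 hn'
      exact (mem_filter.1 hx).2.not_ge (le_trans hxn (mem_Icc.1 hn).2)
    have hcover : ↑(Icc x₀ b) ∪ (⋃ x ∈ F', Set.Ici x) ⊆ ⋃ x ∈ F, Set.Ici x := by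
      refine Set.union_subset (fun n hn => Set.mem_biUnion (F.min'_mem hne) (mem_Icc.1 hn).1) ?_
      exact Set.biUnion_subset_biUnion_left (coe_subset.2 (filter_subset _ _))
    calc c * #F ≤ c * #(Icc x₀ b) + c * #F' := by rw [← mul_add]; gcongr; exact_mod_cast hcard
      _ ≤ ∑ n ∈ Icc x₀ b, g n + ∑' n, (⋃ x ∈ F', Set.Ici x).indicator g n :=
        add_le_add hb (ih F' hF' ((coe_subset.2 (filter_subset _ _)).trans hF))
      _ = ∑' n, (↑(Icc x₀ b) ∪ ⋃ x ∈ F', Set.Ici x).indicator g n := by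
        rw [sum_eq_tsum_indicator, ← ENNReal.tsum_add, Set.indicator_union_of_disjoint hdisj]
      _ ≤ ∑' n, (⋃ x ∈ F, Set.Ici x).indicator g n :=
        ENNReal.tsum_le_tsum fun n => Set.indicator_le_indicator_of_subset hcover (by simp) n

theorem mul_card_le_tsum_of_subset_rightHeavy {F : Finset α} (hF : ↑F ⊆ rightHeavy g c) :
    c * #F ≤ ∑' n, g n :=
  (mul_card_le_tsum_indicator_of_subset_rightHeavy F hF).trans
    (ENNReal.tsum_le_tsum fun n => Set.indicator_le_self _ _ n)

theorem mul_card_le_tsum_of_subset_leftHeavy {F : Finset α} (hF : ↑F ⊆ leftHeavy g c) :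
    c * #F ≤ ∑' n, g n := by
  have hdual : ↑(F.map OrderDual.toDual.toEmbedding) ⊆ rightHeavy (g ∘ OrderDual.ofDual) c := by
    intro y hy
    obtain ⟨x, hx, rfl⟩ := mem_map.1 hy
    obtain ⟨a, hax, ha⟩ := hF hx
    refine ⟨OrderDual.toDual a, OrderDual.toDual_le_toDual.2 hax, ?_⟩
    simpa [Icc_toDual] using ha
  simpa [OrderDual.ofDual.tsum_eq g] using mul_card_le_tsum_of_subset_rightHeavy hdual

end RisingSun

theorem mul_count_le_of_forall_finset {β : Type*} [MeasurableSpace β] [MeasurableSingletonClass β]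
    {s : Set β} (hs : MeasurableSet s) {c K : ℝ≥0∞} (h : ∀ F : Finset β, ↑F ⊆ s → c * #F ≤ K) :
    c * Measure.count s ≤ K := by
  classical
  rw [← lintegral_indicator_one hs, lintegral_count, ← ENNReal.tsum_mul_left,
    ENNReal.tsum_eq_iSup_sum]
  refine iSup_le fun F => ?_
  calc ∑ x ∈ F, c * s.indicator 1 x = c * #(F.filter (· ∈ s)) := by
        simp [Set.indicator_apply, ← sum_filter, mul_comm]
    _ ≤ K := h _ fun x hx => (mem_filter.1 hx).2

theorem mem_leftHeavy_or_add_one_mem_rightHeavy {g : ℤ → ℝ≥0∞} {c : ℝ≥0∞} (hc : c ≠ ∞)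
    {a b x : ℤ} (hax : a ≤ x) (hxb : x ≤ b) (h : c * #(Icc a b) < ∑ n ∈ Icc a b, g n) :
    x ∈ leftHeavy g c ∨ x + 1 ∈ rightHeavy g c := by
  by_contra H
  simp only [leftHeavy, rightHeavy, Set.mem_ofPred_eq, not_or, not_exists, not_and, not_le] at H
  obtain ⟨hl, hr⟩ := H
  have hsplit : Icc a b = Icc a x ∪ Icc (x + 1) b := by ext; simp only [mem_union, mem_Icc]; omega
  have hdisj : Disjoint (Icc a x) (Icc (x + 1) b) :=
    disjoint_left.2 fun n h₁ h₂ => by rw [mem_Icc] at h₁ h₂; omega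
  have hright : ∑ n ∈ Icc (x + 1) b, g n ≤ c * #(Icc (x + 1) b) := by
    rcases le_or_gt (x + 1) b with hb | hb
    · exact (hr b hb).le
    · simp [Icc_eq_empty_of_lt hb]
  refine (h.trans ?_).false
  rw [hsplit, sum_union hdisj, card_union_of_disjoint hdisj, Nat.cast_add, mul_add]
  exact ENNReal.add_lt_add_of_lt_of_le
    (ne_top_of_le_ne_top (ENNReal.mul_ne_top hc (natCast_ne_top _)) hright) (hl a hax) hright

theorem shiftZ_zpow_apply (n x : ℤ) : (shiftZ ^ n) x = x + n := by
  simp [shiftZ]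

theorem maxU_shiftZ_apply (f : ℤ → ℝ) (x : ℤ) :
    maxU shiftZ f x = ⨆ r : ℕ, ⨆ s : ℕ, ‖∑ m ∈ Icc (x - r) (x + s), f m‖ₑ / (r + s + 1) := by
  refine iSup_congr fun r => iSup_congr fun s => ?_
  have hwindow : ∑ n ∈ Icc (-(r : ℤ)) s, f ((shiftZ ^ n) x) = ∑ m ∈ Icc (x - r) (x + s), f m := by
    simp_rw [shiftZ_zpow_apply, sub_eq_add_neg, ← map_add_left_Icc, sum_map]
    rfl
  rw [hwindow, ← enorm_eq_nnnorm, Real.enorm_eq_ofReal_abs, abs_div,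
    abs_of_pos (by positivity : (0 : ℝ) < r + s + 1), ENNReal.ofReal_div_of_pos (by positivity),
    ← Real.enorm_eq_ofReal_abs, ENNReal.ofReal_add (by positivity) zero_le_one,
    ENNReal.ofReal_add (by positivity) (by positivity)]
  simp

theorem exists_Icc_lt_sum_enorm_of_lt_maxU {f : ℤ → ℝ} {x : ℤ} {c : ℝ≥0∞}
    (h : c < maxU shiftZ f x) :
    ∃ a b, a ≤ x ∧ x ≤ b ∧ c * #(Icc a b) < ∑ n ∈ Icc a b, ‖f n‖ₑ := by
  rw [maxU_shiftZ_apply] at h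
  obtain ⟨r, hr⟩ := lt_iSup_iff.1 h
  obtain ⟨s, hs⟩ := lt_iSup_iff.1 hr
  refine ⟨x - r, x + s, by omega, by omega, ?_⟩
  have hcard : (#(Icc (x - r) (x + s)) : ℝ≥0∞) = r + s + 1 := by
    rw [Int.card_Icc, show (x + s + 1 - (x - r)).toNat = r + s + 1 by omega]
    push_cast; rfl
  rw [hcard, ← ENNReal.lt_div_iff_mul_lt (.inl (by positivity)) (.inl (by simp))]
  exact hs.trans_le (by gcongr; exact enorm_sum_le _ _)

theorem mul_count_lt_maxU_le_two_mul_tsum (f : ℤ → ℝ) (c : ℝ≥0) :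
    c * Measure.count {x | (c : ℝ≥0∞) < maxU shiftZ f x} ≤ 2 * ∑' n, ‖f n‖ₑ := by
  set g : ℤ → ℝ≥0∞ := fun n => ‖f n‖ₑ
  have hcover : {x | (c : ℝ≥0∞) < maxU shiftZ f x} ⊆
      leftHeavy g c ∪ (· + 1) ⁻¹' rightHeavy g c := fun x hx => by
    obtain ⟨a, b, hax, hxb, h⟩ := exists_Icc_lt_sum_enorm_of_lt_maxU hx
    exact mem_leftHeavy_or_add_one_mem_rightHeavy coe_ne_top hax hxb h
  have hleft : c * Measure.count (leftHeavy g c) ≤ ∑' n, g n :=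
    mul_count_le_of_forall_finset .of_discrete fun _ => mul_card_le_tsum_of_subset_leftHeavy
  have hright : c * Measure.count (rightHeavy g c) ≤ ∑' n, g n :=
    mul_count_le_of_forall_finset .of_discrete fun _ => mul_card_le_tsum_of_subset_rightHeavy
  calc c * Measure.count {x | (c : ℝ≥0∞) < maxU shiftZ f x}
      ≤ c * (Measure.count (leftHeavy g c) + Measure.count (rightHeavy g c)) := by
        rw [← measure_preimage_add_right Measure.count 1 (rightHeavy g c)]
        exact mul_le_mul_right ((measure_mono hcover).trans (measure_union_le _ _)) _
    _ ≤ 2 * ∑' n, g n := by rw [mul_add, two_mul]; exact add_le_add hleft hright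

theorem mul_count_le_maxU_le_two_mul_eLpNorm (f : ℤ → ℝ) (l : ℝ≥0∞) :
    l * Measure.count {x | l ≤ maxU shiftZ f x} ≤ 2 * eLpNorm f 1 Measure.count := by
  rw [eLpNorm_one_eq_lintegral_enorm, lintegral_count]
  refine ENNReal.mul_le_of_forall_lt fun c hc m hm => ?_
  lift c to ℝ≥0 using hc.ne_top
  calc (c : ℝ≥0∞) * m ≤ c * Measure.count {x | (c : ℝ≥0∞) < maxU shiftZ f x} := by
        gcongr
        exact hm.le.trans (measure_mono fun x hx => hc.trans_le hx)
    _ ≤ 2 * ∑' n, ‖f n‖ₑ := mul_count_lt_maxU_le_two_mul_tsum f c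

theorem inv_succ_le_maxU_single {N : ℕ} {x : ℤ} (hx : x ∈ Icc (-(N : ℤ)) N) :
    ((N : ℝ≥0∞) + 1)⁻¹ ≤ maxU shiftZ (Pi.single 0 1) x := by
  rw [mem_Icc] at hx
  have hr : x.toNat ≤ N := by omega
  rw [maxU_shiftZ_apply]
  refine le_iSup₂_of_le x.toNat (N - x.toNat) ?_
  have h0 : (0 : ℤ) ∈ Icc (x - x.toNat) (x + (N - x.toNat : ℕ)) := by rw [mem_Icc]; omega
  rw [sum_pi_single', if_pos h0, ← Nat.cast_add, Nat.add_sub_cancel' hr]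
  simp

theorem two_le_of_weak_type {C : ℝ≥0∞} (hC : ∀ f : ℤ → ℝ, Integrable f Measure.count →
    ∀ l : ℝ≥0∞, l * Measure.count {x | l ≤ maxU shiftZ f x} ≤ C * eLpNorm f 1 Measure.count) :
    2 ≤ C := by
  set δ : ℤ → ℝ := Pi.single 0 1
  have hnorm : eLpNorm δ 1 Measure.count = 1 := by
    rw [eLpNorm_one_eq_lintegral_enorm, lintegral_count]
    simp [δ, Pi.single_apply, apply_ite]
  have hint : Integrable δ Measure.count :=
    memLp_one_iff_integrable.1 ⟨Measurable.of_discrete.aestronglyMeasurable, by simp [hnorm]⟩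
  have hbound : ∀ N : ℕ, ((N : ℝ≥0∞) + 1)⁻¹ * (2 * N + 1) ≤ C := fun N => by
    have hcount : (2 * N + 1 : ℝ≥0∞) ≤
        Measure.count {x | ((N : ℝ≥0∞) + 1)⁻¹ ≤ maxU shiftZ δ x} := by
      calc (2 * N + 1 : ℝ≥0∞) = Measure.count (↑(Icc (-(N : ℤ)) N) : Set ℤ) := by
            rw [Measure.count_apply_finset, Int.card_Icc,
              show ((N : ℤ) + 1 - -N).toNat = 2 * N + 1 by omega]
            push_cast; rfl
        _ ≤ _ := measure_mono fun x hx => inv_succ_le_maxU_single hx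
    simpa [hnorm] using (mul_le_mul_right hcount _).trans (hC δ hint ((N : ℝ≥0∞) + 1)⁻¹)
  refine ENNReal.le_of_forall_pos_le_add fun ε hε _ => ?_
  obtain ⟨N, hN⟩ := ENNReal.exists_inv_nat_lt (a := ε) (by positivity)
  calc (2 : ℝ≥0∞) = ((N : ℝ≥0∞) + 1)⁻¹ * (2 * N + 1) + ((N : ℝ≥0∞) + 1)⁻¹ := by
        rw [← mul_add_one, add_assoc, one_add_one_eq_two, ← mul_add_one, mul_left_comm,
          ENNReal.inv_mul_cancel (by positivity) (by simp), mul_one]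
    _ ≤ C + ε := add_le_add (hbound N) ((ENNReal.inv_le_inv.2 le_self_add).trans hN.le)

/-- The best constant in the weak type (1,1) inequality for the uncentered maximal operator on
the canonical system `X₁ = ℤ` equals `2`; in particular
`λ · #{l : M^u f(l) ≥ λ} ≤ 2 ‖f‖₁` for all `f ∈ ℓ¹(ℤ)` and all `λ`, and `2` cannot be replaced
by any smaller constant. -/
theorem uncentered_weak_const_int :
    (∀ f : ℤ → ℝ, Integrable f (Measure.count : Measure ℤ) →
      ∀ l : ℝ≥0∞, l * (Measure.count : Measure ℤ) {x : ℤ | l ≤ maxU shiftZ f x} ≤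
        2 * eLpNorm f 1 (Measure.count : Measure ℤ)) ∧
    weakConst (Measure.count : Measure ℤ) (maxU shiftZ) = 2 :=
  ⟨fun f _ l => mul_count_le_maxU_le_two_mul_eLpNorm f l,
    le_antisymm (sInf_le fun f _ l => mul_count_le_maxU_le_two_mul_eLpNorm f l)
      (le_sInf fun _ hC => two_le_of_weak_type hC)⟩

end
end

section
/- Let X be a nontrivial σ-finite ergodic system satisfying the Rokhlin condition: for each L ∈ ℕ there exists a measurable set E_L with μ(E_L) ∈ (0,∞) such that the sets T^{−l}(E_L), l = 1, …, L, are pairwise disjoint. Then the best constant in the weak type (1,1) inequality for the uncentered ergodic maximal operator on X equals 2: C^u(X, 1) = 2. -/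
open MeasureTheory ENNReal Filter

noncomputable section

variable {X : Type*} [MeasurableSpace X]

/-!
Upper bound, by transference: along an orbit segment `x, …, T^N x`, count the times `j` at which
some window `[j - r, j + s]` has average at least `c`. From any finite family of such windows one
can discard redundant ones until each keeps a private point; then no integer lies in three of
them, since the windows reaching furthest left and furthest right would cover the private point
of a third. So `c` times the count is at most twice the sum of `|f|` over a slightly longer
segment; integrating and letting `N → ∞` removes the boundary terms.

Lower bound: for a Rokhlin tower `T⁻¹E, …, T^{-(2L+1)}E` with pairwise disjoint levels, every
point of the tower is within `L` steps of the middle level, so the indicator of the middle level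
has uncentered maximal function at least `1/(L+1)` on all `2L+1` levels. Hence
`C ≥ (2L+1)/(L+1) → 2`.
-/

namespace Finset

variable {ι α : Type*} [DecidableEq ι]

theorem exists_subset_biUnion_eq_forall_exists_private [DecidableEq α] (J : Finset ι)
    (s : ι → Finset α) :
    ∃ J' ⊆ J, J'.biUnion s = J.biUnion s ∧
      ∀ j ∈ J', ∃ m ∈ s j, ∀ i ∈ J', i ≠ j → m ∉ s i := by
  induction J using Finset.strongInduction with
  | H J ih =>
    by_cases hpriv : ∀ j ∈ J, ∃ m ∈ s j, ∀ i ∈ J, i ≠ j → m ∉ s i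
    · exact ⟨J, subset_rfl, rfl, hpriv⟩
    push Not at hpriv
    obtain ⟨j₀, hj₀, hred⟩ := hpriv
    obtain ⟨J', hJ', hunion, hJ'priv⟩ := ih (J.erase j₀) (erase_ssubset hj₀)
    refine ⟨J', hJ'.trans (erase_subset _ _), hunion.trans ?_, hJ'priv⟩
    refine (biUnion_subset_biUnion_of_subset_left _ (erase_subset _ _)).antisymm ?_
    intro m hm
    obtain ⟨j, hj, hmj⟩ := mem_biUnion.mp hm
    by_cases hjj₀ : j = j₀
    · obtain ⟨i, hi, hij₀, hmi⟩ := hred m (hjj₀ ▸ hmj)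
      exact mem_biUnion.mpr ⟨i, mem_erase.mpr ⟨hij₀, hi⟩, hmi⟩
    · exact mem_biUnion.mpr ⟨j, mem_erase.mpr ⟨hjj₀, hj⟩, hmj⟩

variable [LinearOrder α] [LocallyFiniteOrder α]

theorem card_filter_mem_Icc_le_two {J : Finset ι} {p q : ι → α}
    (hpriv : ∀ j ∈ J, ∃ m ∈ Icc (p j) (q j), ∀ i ∈ J, i ≠ j → m ∉ Icc (p i) (q i)) (n : α) :
    #{j ∈ J | n ∈ Icc (p j) (q j)} ≤ 2 := by
  set F := {j ∈ J | n ∈ Icc (p j) (q j)}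
  by_contra! hF
  obtain ⟨jp, hjp, hjp_min⟩ := F.exists_min_image p (card_pos.mp (by omega))
  obtain ⟨jq, hjq, hjq_max⟩ := F.exists_max_image q (card_pos.mp (by omega))
  obtain ⟨j, hj, hjjq⟩ := exists_mem_ne (s := F.erase jp)
    (by have := pred_card_le_card_erase (s := F) (a := jp); omega) jq
  obtain ⟨hjjp, hjF⟩ := mem_erase.mp hj
  obtain ⟨hjpJ, hnp⟩ := mem_filter.mp hjp
  obtain ⟨hjqJ, hnq⟩ := mem_filter.mp hjq
  obtain ⟨m, hm, hm_priv⟩ := hpriv j (mem_filter.mp hjF).1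
  rw [mem_Icc] at hm hnp hnq
  rcases le_total m n with hmn | hnm
  · exact hm_priv jp hjpJ (Ne.symm hjjp)
      (mem_Icc.mpr ⟨(hjp_min j hjF).trans hm.1, hmn.trans hnp.2⟩)
  · exact hm_priv jq hjqJ (Ne.symm hjjq)
      (mem_Icc.mpr ⟨hnq.1.trans hnm, hm.2.trans (hjq_max j hjF)⟩)

theorem mul_card_biUnion_Icc_le_two_mul_sum (a : α → ℝ≥0∞) (c : ℝ≥0∞) (J : Finset ι)
    (p q : ι → α) (hJ : ∀ j ∈ J, c * #(Icc (p j) (q j)) ≤ ∑ n ∈ Icc (p j) (q j), a n) :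
    c * #(J.biUnion fun j => Icc (p j) (q j)) ≤
      2 * ∑ n ∈ J.biUnion (fun j => Icc (p j) (q j)), a n := by
  obtain ⟨J', hJ'J, hunion, hpriv⟩ :=
    exists_subset_biUnion_eq_forall_exists_private J fun j => Icc (p j) (q j)
  rw [← hunion]
  set U := J'.biUnion fun j => Icc (p j) (q j)
  have hcount : ∑ j ∈ J', ∑ n ∈ Icc (p j) (q j), a n =
      ∑ n ∈ U, #{j ∈ J' | n ∈ Icc (p j) (q j)} * a n := by
    rw [sum_comm' (t' := U) (s' := fun n => {j ∈ J' | n ∈ Icc (p j) (q j)})]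
    · simp only [sum_const, nsmul_eq_mul]
    · intro j n
      simp only [U, mem_filter, mem_biUnion]
      exact ⟨fun h => ⟨h, j, h⟩, fun h => h.1⟩
  calc c * #U ≤ c * ∑ j ∈ J', (#(Icc (p j) (q j)) : ℝ≥0∞) := by
        gcongr; exact_mod_cast card_biUnion_le
    _ ≤ ∑ j ∈ J', ∑ n ∈ Icc (p j) (q j), a n := by
        rw [mul_sum]; exact sum_le_sum fun j hj => hJ j (hJ'J hj)
    _ = ∑ n ∈ U, #{j ∈ J' | n ∈ Icc (p j) (q j)} * a n := hcount
    _ ≤ ∑ n ∈ U, 2 * a n := by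
        gcongr with n; exact_mod_cast card_filter_mem_Icc_le_two hpriv n
    _ = 2 * ∑ n ∈ U, a n := (mul_sum _ _ _).symm

theorem mul_card_le_two_mul_sum_Icc (a : α → ℝ≥0∞) (c : ℝ≥0∞) (J : Finset α) (lo hi : α)
    (hJ : ∀ j ∈ J, ∃ p q, j ∈ Icc p q ∧ Icc p q ⊆ Icc lo hi ∧
      c * #(Icc p q) ≤ ∑ n ∈ Icc p q, a n) :
    c * #J ≤ 2 * ∑ n ∈ Icc lo hi, a n := by
  choose! p q hmem hsub havg using hJ
  calc c * #J ≤ c * #(J.biUnion fun j => Icc (p j) (q j)) := by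
        gcongr; exact fun j hj => mem_biUnion.mpr ⟨j, hj, hmem j hj⟩
    _ ≤ 2 * ∑ n ∈ J.biUnion (fun j => Icc (p j) (q j)), a n :=
        mul_card_biUnion_Icc_le_two_mul_sum a c J p q havg
    _ ≤ 2 * ∑ n ∈ Icc lo hi, a n := by
        gcongr; exact biUnion_subset.mpr hsub

end Finset

open Finset

theorem MeasureTheory.MeasurePreserving.perm_zpow {μ : Measure X} {T : Equiv.Perm X}
    (hT : MeasurePreserving (⇑T) μ μ) (hTs : Measurable (⇑T.symm)) (n : ℤ) :
    MeasurePreserving (⇑(T ^ n)) μ μ := by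
  have hsymm : MeasurePreserving (⇑T.symm) μ μ :=
    hT.symm (MeasurableEquiv.mk T hT.measurable hTs)
  cases n with
  | ofNat n => simpa [Equiv.Perm.coe_pow] using hT.iterate n
  | negSucc n =>
    simpa [zpow_negSucc, ← inv_pow, Equiv.Perm.coe_pow, Equiv.Perm.inv_def,
      -Function.iterate_succ] using hsymm.iterate (n + 1)

theorem ENNReal.le_of_forall_mul_succ_le_mul_succ_add {c d B : ℝ≥0∞} (hB : B ≠ ∞)
    (h : ∀ N : ℕ, c * (N + 1) ≤ d * (N + 1) + B) : c ≤ d := by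
  refine ENNReal.le_of_forall_pos_le_add fun ε hε _ => ?_
  have hε0 : (ε : ℝ≥0∞) ≠ 0 := by exact_mod_cast hε.ne'
  obtain ⟨N, hN⟩ := ENNReal.exists_nat_gt (ENNReal.div_ne_top hB hε0)
  have hBε : B ≤ ε * (N + 1) := by
    rw [mul_comm]
    exact (ENNReal.div_le_iff hε0 (by simp)).mp (hN.le.trans le_self_add)
  refine (ENNReal.mul_le_mul_iff_left (c := (N : ℝ≥0∞) + 1) (by positivity) (by simp)).mp ?_
  calc c * (N + 1) ≤ d * (N + 1) + B := h N
    _ ≤ d * (N + 1) + ε * (N + 1) := by gcongr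
    _ = (d + ε) * (N + 1) := (add_mul _ _ _).symm

theorem MeasureTheory.lintegral_finset_sum_comp_measurePreserving {α ι : Type*}
    [MeasurableSpace α] {μ : Measure α} (S : Finset ι) {φ : ι → α → α}
    (hφ : ∀ i ∈ S, MeasurePreserving (φ i) μ μ) {g : α → ℝ≥0∞} (hg : Measurable g) :
    ∫⁻ x, ∑ i ∈ S, g (φ i x) ∂μ = #S * ∫⁻ x, g x ∂μ := by
  rw [lintegral_finsetSum' (f := fun i x => g (φ i x)) _
      fun i hi => (hg.comp (hφ i hi).measurable).aemeasurable,
    Finset.sum_congr rfl fun i hi => (hφ i hi).lintegral_comp hg, sum_const, nsmul_eq_mul]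

section Averages

variable {α : Type*} (T : Equiv.Perm α) (f : α → ℝ)

def uncenteredAvg (r s : ℕ) (x : α) : ℝ :=
  (∑ n ∈ Icc (-(r : ℤ)) s, f ((T ^ n) x)) / (r + s + 1)

theorem maxU_eq_iSup_enorm_uncenteredAvg (x : α) :
    maxU T f x = ⨆ (r : ℕ) (s : ℕ), ‖uncenteredAvg T f r s x‖ₑ := rfl

theorem enorm_sum_eq_enorm_uncenteredAvg_mul (r s : ℕ) (x : α) :
    ‖∑ n ∈ Icc (-(r : ℤ)) s, f ((T ^ n) x)‖ₑ = ‖uncenteredAvg T f r s x‖ₑ * (r + s + 1) := by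
  have hk : ((r : ℝ≥0∞) + s + 1) = ‖(r : ℝ) + s + 1‖ₑ := by
    rw [show (r : ℝ) + s + 1 = ((r + s + 1 : ℕ) : ℝ) by push_cast; ring, Real.enorm_natCast]
    push_cast; rfl
  rw [uncenteredAvg, hk, ← enorm_mul, div_mul_cancel₀ _ (by positivity)]

theorem sum_Icc_apply_zpow_apply (r s : ℕ) (j : ℤ) (x : α) :
    ∑ n ∈ Icc (-(r : ℤ)) s, f ((T ^ n) ((T ^ j) x)) =
      ∑ n ∈ Icc (j - r) (j + s), f ((T ^ n) x) := by
  rw [show Icc (j - r) (j + s) = (Icc (-(r : ℤ)) s).map (addRightEmbedding j) by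
    rw [map_add_right_Icc]; congr 1 <;> omega, sum_map]
  simp only [addRightEmbedding_apply, zpow_add, Equiv.Perm.mul_apply]

theorem mul_card_Icc_le_sum_enorm_of_le_enorm_uncenteredAvg {c : ℝ≥0∞} {r s : ℕ} {j : ℤ}
    {x : α} (h : c ≤ ‖uncenteredAvg T f r s ((T ^ j) x)‖ₑ) :
    c * #(Icc (j - r) (j + s)) ≤ ∑ n ∈ Icc (j - r) (j + s), ‖f ((T ^ n) x)‖ₑ := by
  have hcard : #(Icc (j - r) (j + s)) = r + s + 1 := by rw [Int.card_Icc]; omega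
  calc c * #(Icc (j - r) (j + s))
      ≤ ‖uncenteredAvg T f r s ((T ^ j) x)‖ₑ * (r + s + 1) := by rw [hcard]; push_cast; gcongr
    _ = ‖∑ n ∈ Icc (j - r) (j + s), f ((T ^ n) x)‖ₑ := by
        rw [← enorm_sum_eq_enorm_uncenteredAvg_mul, sum_Icc_apply_zpow_apply]
    _ ≤ ∑ n ∈ Icc (j - r) (j + s), ‖f ((T ^ n) x)‖ₑ := enorm_sum_le _ _

end Averages

section LevelSets

variable {α : Type*} (T : Equiv.Perm α) (f : α → ℝ)

def truncLevelSet (c : ℝ≥0∞) (K : ℕ) : Set α :=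
  {x | ∃ r ≤ K, ∃ s ≤ K, c ≤ ‖uncenteredAvg T f r s x‖ₑ}

theorem mul_sum_indicator_truncLevelSet_le (c : ℝ≥0∞) (K N : ℕ) (x : α) :
    c * ∑ j ∈ Icc (0 : ℤ) N, (truncLevelSet T f c K).indicator 1 ((T ^ j) x) ≤
      2 * ∑ n ∈ Icc (-(K : ℤ)) (N + K), ‖f ((T ^ n) x)‖ₑ := by
  classical
  simp only [Set.indicator_apply, Pi.one_apply, sum_boole]
  refine mul_card_le_two_mul_sum_Icc _ c _ _ _ fun j hj => ?_
  obtain ⟨hjN, r, hr, s, hs, hrs⟩ := mem_filter.mp hj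
  rw [mem_Icc] at hjN
  exact ⟨j - r, j + s, mem_Icc.mpr ⟨by omega, by omega⟩, Icc_subset_Icc (by omega) (by omega),
    mul_card_Icc_le_sum_enorm_of_le_enorm_uncenteredAvg T f hrs⟩

variable [MeasurableSpace α]

theorem measurable_uncenteredAvg (hT : ∀ n : ℤ, Measurable ⇑(T ^ n)) (hf : Measurable f)
    (r s : ℕ) : Measurable (uncenteredAvg T f r s) :=
  (Finset.measurable_sum _ fun n _ => hf.comp (hT n)).div_const _

theorem measurableSet_truncLevelSet (hT : ∀ n : ℤ, Measurable ⇑(T ^ n)) (hf : Measurable f)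
    (c : ℝ≥0∞) (K : ℕ) : MeasurableSet (truncLevelSet T f c K) := by
  refine measurableSet_setOfPred.mpr <| Measurable.exists fun r => measurable_const.and <|
    Measurable.exists fun s => measurable_const.and <| measurableSet_setOfPred.mp <|
      measurableSet_le measurable_const (measurable_uncenteredAvg T f hT hf r s).enorm

variable {μ : Measure α}

theorem mul_measure_truncLevelSet_le (hT : ∀ n : ℤ, MeasurePreserving ⇑(T ^ n) μ μ)
    (hf : Measurable f) (c : ℝ≥0∞) (K : ℕ) :
    c * μ (truncLevelSet T f c K) ≤ 2 * ∫⁻ x, ‖f x‖ₑ ∂μ := by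
  set E := truncLevelSet T f c K
  set I := ∫⁻ x, ‖f x‖ₑ ∂μ
  have hE : MeasurableSet E := measurableSet_truncLevelSet T f (fun n => (hT n).measurable) hf c K
  rcases eq_or_ne I ∞ with hI | hI
  · simp [hI]
  refine ENNReal.le_of_forall_mul_succ_le_mul_succ_add (B := 2 * (2 * K) * I)
    (by finiteness) fun N => ?_
  have hcardN : #(Icc (0 : ℤ) N) = N + 1 := by rw [Int.card_Icc]; omega
  have hcardK : #(Icc (-(K : ℤ)) (N + K)) = N + 2 * K + 1 := by rw [Int.card_Icc]; omega
  have hind : Measurable (E.indicator (1 : α → ℝ≥0∞)) := measurable_one.indicator hE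
  calc c * μ E * (N + 1)
      = ∫⁻ x, c * ∑ j ∈ Icc (0 : ℤ) N, E.indicator 1 ((T ^ j) x) ∂μ := by
        rw [lintegral_const_mul (f := fun x => ∑ j ∈ Icc (0 : ℤ) N, E.indicator 1 ((T ^ j) x))
            _ (Finset.measurable_sum _ fun j _ => hind.comp (hT j).measurable),
          lintegral_finset_sum_comp_measurePreserving _ (fun j _ => hT j) hind,
          lintegral_indicator_one hE, hcardN]
        push_cast; ring
    _ ≤ ∫⁻ x, 2 * ∑ n ∈ Icc (-(K : ℤ)) (N + K), ‖f ((T ^ n) x)‖ₑ ∂μ :=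
        lintegral_mono fun x => mul_sum_indicator_truncLevelSet_le T f c K N x
    _ = 2 * (N + 2 * K + 1) * I := by
        rw [lintegral_const_mul' _ _ (by simp),
          lintegral_finset_sum_comp_measurePreserving _ (fun n _ => hT n) hf.enorm, hcardK]
        push_cast; ring
    _ = 2 * I * (N + 1) + 2 * (2 * K) * I := by ring

end LevelSets

section WeakType

variable {α : Type*} [MeasurableSpace α] {μ : Measure α} {T : Equiv.Perm α}

theorem mul_measure_le_maxU_le_of_measurable (hT : ∀ n : ℤ, MeasurePreserving ⇑(T ^ n) μ μ)
    {f : α → ℝ} (hf : Measurable f) (lam : ℝ≥0∞) :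
    lam * μ {x | lam ≤ maxU T f x} ≤ 2 * ∫⁻ x, ‖f x‖ₑ ∂μ := by
  refine ENNReal.mul_le_of_forall_lt fun c hc m hm => ?_
  have hsub : {x | lam ≤ maxU T f x} ⊆ ⋃ K, truncLevelSet T f c K := by
    intro x hx
    obtain ⟨r, s, hrs⟩ : ∃ r s, c < ‖uncenteredAvg T f r s x‖ₑ := by
      simpa only [maxU_eq_iSup_enorm_uncenteredAvg, lt_iSup_iff] using hc.trans_le hx
    exact Set.mem_iUnion.mpr ⟨max r s, r, le_max_left _ _, s, le_max_right _ _, hrs.le⟩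
  have hmono : Monotone (truncLevelSet T f c) := fun K K' hK x ⟨r, hr, s, hs, h⟩ =>
    ⟨r, hr.trans hK, s, hs.trans hK, h⟩
  calc c * m ≤ c * μ (⋃ K, truncLevelSet T f c K) := by
        gcongr; exact hm.le.trans (measure_mono hsub)
    _ = ⨆ K, c * μ (truncLevelSet T f c K) := by rw [hmono.measure_iUnion, ENNReal.mul_iSup]
    _ ≤ 2 * ∫⁻ x, ‖f x‖ₑ ∂μ := iSup_le fun K => mul_measure_truncLevelSet_le T f hT hf c K

theorem maxU_ae_eq (hT : ∀ n : ℤ, MeasurePreserving ⇑(T ^ n) μ μ) {f g : α → ℝ}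
    (hfg : f =ᵐ[μ] g) : maxU T f =ᵐ[μ] maxU T g := by
  have horbit : ∀ᵐ x ∂μ, ∀ n : ℤ, f ((T ^ n) x) = g ((T ^ n) x) :=
    ae_all_iff.mpr fun n => ae_eq_comp (hT n).aemeasurable (by rwa [(hT n).map_eq])
  filter_upwards [horbit] with x hx
  simp only [maxU, hx]

theorem mul_measure_le_maxU_le (hT : ∀ n : ℤ, MeasurePreserving ⇑(T ^ n) μ μ) {f : α → ℝ}
    (hf : AEMeasurable f μ) (lam : ℝ≥0∞) :
    lam * μ {x | lam ≤ maxU T f x} ≤ 2 * eLpNorm f 1 μ := by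
  have hlevel : {x | lam ≤ maxU T f x} =ᵐ[μ] {x | lam ≤ maxU T (hf.mk f) x} :=
    eventuallyEq_set.mpr <| (maxU_ae_eq hT hf.ae_eq_mk).mono fun x hx => by
      simp only [Set.mem_ofPred_eq, hx]
  rw [measure_congr hlevel, eLpNorm_congr_ae hf.ae_eq_mk, eLpNorm_one_eq_lintegral_enorm]
  exact mul_measure_le_maxU_le_of_measurable hT hf.measurable_mk lam

end WeakType

section LowerBound

variable {α : Type*} {T : Equiv.Perm α}

theorem inv_succ_le_maxU_indicator {F : Set α} {x : α} {m : ℤ} {L : ℕ} (hm : (T ^ m) x ∈ F)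
    (hmL : |m| ≤ L) : ((L : ℝ≥0∞) + 1)⁻¹ ≤ maxU T (F.indicator 1) x := by
  set r := (-m).toNat with hr
  set s := m.toNat with hs
  rw [abs_le] at hmL
  have hrs : ((r + s : ℕ) : ℝ≥0∞) ≤ L := by gcongr; omega
  have hsum : 1 ≤ ∑ n ∈ Icc (-(r : ℤ)) s, F.indicator (1 : α → ℝ) ((T ^ n) x) :=
    calc (1 : ℝ) = F.indicator 1 ((T ^ m) x) := (Set.indicator_of_mem hm 1).symm
      _ ≤ _ := single_le_sum (f := fun n => F.indicator (1 : α → ℝ) ((T ^ n) x))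
          (fun n _ => Set.indicator_nonneg (fun _ _ => zero_le_one) _)
          (Finset.mem_Icc.mpr ⟨by omega, by omega⟩)
  rw [maxU_eq_iSup_enorm_uncenteredAvg]
  refine le_iSup₂_of_le r s <| (ENNReal.inv_le_iff_le_mul (fun _ => by positivity)
    (fun h => absurd h (by simp))).mpr ?_
  calc 1 ≤ ‖∑ n ∈ Icc (-(r : ℤ)) s, F.indicator (1 : α → ℝ) ((T ^ n) x)‖ₑ := by
        rw [Real.enorm_eq_ofReal (zero_le_one.trans hsum)]; exact ENNReal.one_le_ofReal.mpr hsum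
    _ = ‖uncenteredAvg T (F.indicator 1) r s x‖ₑ * (r + s + 1) :=
        enorm_sum_eq_enorm_uncenteredAvg_mul T _ r s x
    _ ≤ ‖uncenteredAvg T (F.indicator 1) r s x‖ₑ * (L + 1) := by push_cast at hrs; gcongr
    _ = (L + 1) * ‖uncenteredAvg T (F.indicator 1) r s x‖ₑ := mul_comm _ _

end LowerBound

section Rokhlin

variable {α : Type*} [MeasurableSpace α] {μ : Measure α} {T : Equiv.Perm α}

theorem two_mul_add_one_le_of_rokhlinCondition (hT : MeasurePreserving (⇑T) μ μ)
    (hR : RokhlinCondition μ T) {C : ℝ≥0∞}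
    (hC : ∀ f : α → ℝ, Integrable f μ →
      ∀ l : ℝ≥0∞, l * μ {x | l ≤ maxU T f x} ≤ C * eLpNorm f 1 μ) (L : ℕ) :
    2 * (L : ℝ≥0∞) + 1 ≤ C * (L + 1) := by
  obtain ⟨E, hE, hE0, hEtop, hdisj⟩ := hR (2 * L + 1) (by omega)
  have hpow : ∀ k : ℕ, MeasurePreserving (⇑(T ^ k)) μ μ := fun k => by
    simpa [Equiv.Perm.coe_pow] using hT.iterate k
  set F := (⇑(T ^ (L + 1))) ⁻¹' E
  have hF : MeasurableSet F := (hpow _).measurable hE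
  have hμF : μ F = μ E := (hpow _).measure_preimage hE.nullMeasurableSet
  have htower : μ (⋃ l ∈ Icc 1 (2 * L + 1), (⇑(T ^ l)) ⁻¹' E) = (2 * L + 1) * μ E := by
    rw [measure_biUnion_finset (fun l hl l' hl' hll' => ?_)
        (fun l _ => (hpow l).measurable hE),
      sum_congr rfl fun l _ => (hpow l).measure_preimage hE.nullMeasurableSet, sum_const,
      Nat.card_Icc, nsmul_eq_mul]
    · push_cast; ring_nf
    · simp only [coe_Icc, Set.mem_Icc] at hl hl'
      exact hdisj l l' hl.1 hl.2 hl'.1 hl'.2 hll'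
  have htower_sub : (⋃ l ∈ Icc 1 (2 * L + 1), (⇑(T ^ l)) ⁻¹' E) ⊆
      {x | ((L : ℝ≥0∞) + 1)⁻¹ ≤ maxU T (F.indicator 1) x} := by
    intro x hx
    obtain ⟨l, hl, hxl⟩ := Set.mem_iUnion₂.mp hx
    rw [Finset.mem_Icc] at hl
    refine inv_succ_le_maxU_indicator (m := l - (L + 1)) ?_ (abs_le.mpr ⟨by omega, by omega⟩)
    have : T ^ (L + 1) * T ^ ((l : ℤ) - (L + 1)) = T ^ l := by
      rw [← zpow_natCast, ← zpow_natCast, ← zpow_add]; push_cast; ring_nf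
    simpa [F, ← Equiv.Perm.mul_apply, this] using hxl
  have hf : Integrable (F.indicator (1 : α → ℝ)) μ :=
    (integrable_indicator_iff hF).mpr (integrableOn_const (hμF ▸ hEtop).ne)
  have hnorm : eLpNorm (F.indicator (1 : α → ℝ)) 1 μ = μ E := by
    rw [← hμF]
    exact (eLpNorm_indicator_const (c := (1 : ℝ)) hF one_ne_zero one_ne_top).trans (by simp)
  have key := (mul_le_mul_right (measure_mono htower_sub) _).trans (hC _ hf ((L + 1)⁻¹))
  rw [htower, hnorm, ← mul_assoc, mul_comm _ (2 * (L : ℝ≥0∞) + 1), ← div_eq_mul_inv,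
    ENNReal.mul_le_mul_iff_left hE0.ne' hEtop.ne] at key
  exact (ENNReal.div_le_iff (by positivity) (by simp)).mp key

end Rokhlin

theorem uncentered_weak_const_rokhlin_general {X : Type*} [MeasurableSpace X] (μ : Measure X)
    (T : Equiv.Perm X) (hT : MeasurePreserving (⇑T) μ μ) (hTs : Measurable (⇑T.symm))
    (hR : RokhlinCondition μ T) :
    weakConst μ (maxU T) = 2 := by
  have hTn : ∀ n : ℤ, MeasurePreserving ⇑(T ^ n) μ μ := hT.perm_zpow hTs
  refine le_antisymm (sInf_le fun f hf l => mul_measure_le_maxU_le hTn hf.aemeasurable l) ?_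
  refine le_sInf fun C hC => ENNReal.le_of_forall_mul_succ_le_mul_succ_add one_ne_top fun L => ?_
  calc 2 * ((L : ℝ≥0∞) + 1) = (2 * L + 1) + 1 := by ring
    _ ≤ C * (L + 1) + 1 := by gcongr; exact two_mul_add_one_le_of_rokhlinCondition hT hR hC L

/-- Under the Rokhlin condition, the best constant in the weak type (1,1) inequality for the
uncentered ergodic maximal operator on a nontrivial σ-finite ergodic system equals `2`. -/
theorem uncentered_weak_const_rokhlin {X : Type*} [MeasurableSpace X] (μ : Measure X)
    [SigmaFinite μ] (hX : NontrivialSpace μ) (T : Equiv.Perm X)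
    (hT : MeasurePreserving (⇑T) μ μ) (hTs : Measurable (⇑T.symm))
    (hE : IsErgodicPerm μ T) (hR : RokhlinCondition μ T) :
    weakConst μ (maxU T) = 2 :=
  uncentered_weak_const_rokhlin_general μ T hT hTs hR

end
end
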